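/- Define, for x ∈ (0,∞) with x ≠ 1, w(x) = −π√x + x·log|(x+1)/(x−1)| − √x·log|(√x+1)/(√x−1)| + 2√x·arctan(√x). Then w is bounded on (0,∞)∖{1}: there is M > 0 with |w(x)| ≤ M for all such x; moreover w(x) → −2 as x → +∞ and w(x) → 0 as x → 0⁺. -/

import Mathlib

open Real Filter Set Topology

lemma tendsto_sqrt_atTop' : Tendsto Real.sqrt atTop atTop := by
  apply tendsto_atTop_atTop.2
  intro b
  refine ⟨max (b^2) 0, fun a ha => ?_⟩
  rcases le_total b 0 with hb | hb
  · exact hb.trans (Real.sqrt_nonneg a)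
  · have h1 : b^2 ≤ a := le_trans (le_max_left _ _) ha
    calc b = Real.sqrt (b^2) := by rw [Real.sqrt_sq hb]
    _ ≤ Real.sqrt a := Real.sqrt_le_sqrt h1

lemma tendsto_mul_log_abs : Tendsto (fun t : ℝ => t * Real.log |t|) (𝓝 0) (𝓝 0) := by
  have h : Tendsto (fun t : ℝ => |t| * Real.log |t|) (𝓝 0) (𝓝 0) := by
    have h0 := (Real.continuous_mul_log.comp continuous_abs).tendsto 0
    simp only [Function.comp_def, abs_zero, Real.log_zero, mul_zero] at h0
    exact h0
  refine squeeze_zero_norm (fun t => le_of_eq ?_) (abs_zero (α := ℝ) ▸ h.abs)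
  rw [Real.norm_eq_abs, abs_mul, abs_mul, abs_abs]

noncomputable def gaux (x : ℝ) : ℝ :=
  -π * Real.sqrt x + x * Real.log (x + 1) - (x - Real.sqrt x) * Real.log |x - 1|
    - 2 * Real.sqrt x * Real.log (Real.sqrt x + 1) + 2 * Real.sqrt x * Real.arctan (Real.sqrt x)

lemma log_sqrt_sub_one {x : ℝ} (hx : 0 < x) (hx1 : x ≠ 1) :
    Real.log |Real.sqrt x - 1| = Real.log |x - 1| - Real.log (Real.sqrt x + 1) := by
  have hs : Real.sqrt x * Real.sqrt x = x := Real.mul_self_sqrt hx.le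
  have hsp : (0:ℝ) < Real.sqrt x + 1 := by positivity
  have hsne : Real.sqrt x - 1 ≠ 0 := by
    intro h
    exact hx1 (Real.sqrt_eq_one.mp (by linarith))
  have habs : |x - 1| = |Real.sqrt x - 1| * (Real.sqrt x + 1) := by
    rw [show x - 1 = (Real.sqrt x - 1) * (Real.sqrt x + 1) by nlinarith, abs_mul,
      abs_of_pos hsp]
  rw [habs, Real.log_mul (abs_ne_zero.mpr hsne) hsp.ne']
  ring

lemma weq {x : ℝ} (hx : 0 < x) (hx1 : x ≠ 1) :
    -π * Real.sqrt x + x * Real.log (|(x + 1) / (x - 1)|)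
        - Real.sqrt x * Real.log (|(Real.sqrt x + 1) / (Real.sqrt x - 1)|)
        + 2 * Real.sqrt x * Real.arctan (Real.sqrt x) = gaux x := by
  have hx1' : x - 1 ≠ 0 := sub_ne_zero.mpr hx1
  have hxp : (0:ℝ) < x + 1 := by linarith
  have hsp : (0:ℝ) < Real.sqrt x + 1 := by positivity
  have hsne : Real.sqrt x - 1 ≠ 0 := by
    intro h
    exact hx1 (Real.sqrt_eq_one.mp (by linarith))
  have h1 : Real.log (|(x + 1) / (x - 1)|) = Real.log (x + 1) - Real.log |x - 1| := by
    rw [abs_div, Real.log_div (abs_ne_zero.mpr (by linarith)) (abs_ne_zero.mpr hx1'),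
      abs_of_pos hxp]
  have h2 : Real.log (|(Real.sqrt x + 1) / (Real.sqrt x - 1)|)
      = 2 * Real.log (Real.sqrt x + 1) - Real.log |x - 1| := by
    rw [abs_div, Real.log_div (abs_ne_zero.mpr hsp.ne') (abs_ne_zero.mpr hsne),
      abs_of_pos hsp, Real.log_abs, ← Real.log_abs (Real.sqrt x - 1),
      log_sqrt_sub_one hx hx1]
    ring
  rw [h1, h2, gaux]
  ring

lemma contAt_main {x : ℝ} (hx : 0 ≤ x) :
    ContinuousAt (fun x : ℝ => (x - Real.sqrt x) * Real.log |x - 1|) x := by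
  rcases ne_or_eq x 1 with hx1 | rfl
  · have hab : ContinuousAt (fun x : ℝ => |x - 1|) x :=
      (continuous_abs.comp (continuous_sub_right 1)).continuousAt
    exact ((continuousAt_id.sub Real.continuous_sqrt.continuousAt).mul
      (hab.log (abs_ne_zero.mpr (sub_ne_zero.mpr hx1))))
  · -- continuity at x = 1
    have hval : (1 - Real.sqrt 1) * Real.log |1 - 1| = 0 := by simp
    rw [ContinuousAt, hval]
    have h2 : Tendsto (fun x : ℝ => (x - 1) * Real.log |x - 1|) (𝓝 1) (𝓝 0) := by
      have hsub : Tendsto (fun x : ℝ => x - 1) (𝓝 1) (𝓝 0) := by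
        have := (continuous_sub_right (1:ℝ)).tendsto 1
        simpa using this
      exact tendsto_mul_log_abs.comp hsub
    have hc : ContinuousAt (fun x : ℝ => Real.sqrt x / (Real.sqrt x + 1)) 1 :=
      Real.continuous_sqrt.continuousAt.div
        (Real.continuous_sqrt.continuousAt.add continuousAt_const)
        (by norm_num [Real.sqrt_one])
    have prod := hc.tendsto.mul h2
    rw [mul_zero] at prod
    refine prod.congr' ?_
    filter_upwards [eventually_gt_nhds (zero_lt_one (α := ℝ))] with x hx0
    have hs : Real.sqrt x * Real.sqrt x = x := Real.mul_self_sqrt hx0.le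
    have hsp : Real.sqrt x + 1 ≠ 0 := by positivity
    have key : Real.sqrt x / (Real.sqrt x + 1) * (x - 1) = x - Real.sqrt x := by
      field_simp
      nlinarith [hs]
    rw [← mul_assoc, key]

lemma gaux_contAt {x : ℝ} (hx : 0 ≤ x) : ContinuousAt gaux x := by
  have hx1 : x + 1 ≠ 0 := by linarith
  have hsp : Real.sqrt x + 1 ≠ 0 := by positivity
  have t1 : ContinuousAt (fun x : ℝ => -π * Real.sqrt x) x :=
    (continuous_const.mul Real.continuous_sqrt).continuousAt
  have t2 : ContinuousAt (fun x : ℝ => x * Real.log (x + 1)) x :=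
    continuousAt_id.mul (((continuous_add_right (1:ℝ)).continuousAt).log hx1)
  have t3 := contAt_main hx
  have t4 : ContinuousAt (fun x : ℝ => 2 * Real.sqrt x * Real.log (Real.sqrt x + 1)) x :=
    (continuous_const.mul Real.continuous_sqrt).continuousAt.mul
      ((Real.continuous_sqrt.continuousAt.add continuousAt_const).log hsp)
  have t5 : ContinuousAt (fun x : ℝ => 2 * Real.sqrt x * Real.arctan (Real.sqrt x)) x :=
    (continuous_const.mul Real.continuous_sqrt).continuousAt.mul
      (Real.continuous_arctan.comp Real.continuous_sqrt).continuousAt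
  exact ((((t1.add t2).sub t3).sub t4).add t5)

lemma limT1 : Tendsto (fun s : ℝ => s * Real.log ((s + 1) / (s - 1))) atTop (𝓝 2) := by
  have h := (Real.tendsto_mul_log_one_add_div_atTop 1).sub
    (Real.tendsto_mul_log_one_add_div_atTop (-1))
  rw [show (1:ℝ) - (-1) = 2 by norm_num] at h
  refine h.congr' ?_
  filter_upwards [eventually_gt_atTop 1] with s hs
  have h0 : s ≠ 0 := by linarith
  have hA : (0:ℝ) < 1 + 1 / s := by
    have : (0:ℝ) < 1 / s := by positivity
    linarith
  have hB : (0:ℝ) < 1 + (-1) / s := by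
    have h1 : (1:ℝ) / s < 1 := by
      rw [div_lt_one (by linarith : (0:ℝ) < s)]; exact hs
    have : (-1:ℝ)/s = -(1/s) := by ring
    linarith [this]
  have key : (s + 1) / (s - 1) = (1 + 1 / s) / (1 + (-1) / s) := by
    rw [div_eq_div_iff (by linarith) (by linarith)]
    field_simp
    ring
  rw [key, Real.log_div hA.ne' hB.ne']
  ring

lemma limArc : Tendsto (fun s : ℝ => s * (π / 2 - Real.arctan s)) atTop (𝓝 1) := by
  have hd : HasDerivAt Real.arctan 1 0 := by
    simpa using Real.hasDerivAt_arctan 0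
  have hslope := hasDerivAt_iff_tendsto_slope.mp hd
  have hinv : Tendsto (fun s : ℝ => s⁻¹) atTop (𝓝[≠] (0:ℝ)) := by
    apply tendsto_nhdsWithin_of_tendsto_nhds_of_eventually_within _ tendsto_inv_atTop_zero
    filter_upwards [eventually_gt_atTop 0] with s hs
    simp [mem_compl_singleton_iff]
    positivity
  refine (hslope.comp hinv).congr' ?_
  filter_upwards [eventually_gt_atTop 0] with s hs
  show slope Real.arctan 0 s⁻¹ = s * (π / 2 - Real.arctan s)
  rw [slope_def_field]
  rw [Real.arctan_zero, sub_zero, sub_zero, Real.arctan_inv_of_pos hs, div_inv_eq_mul]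
  ring

lemma w_atTop (w : ℝ → ℝ)
    (hw : w = fun x : ℝ =>
      -π * Real.sqrt x + x * Real.log (|(x + 1) / (x - 1)|)
        - Real.sqrt x * Real.log (|(Real.sqrt x + 1) / (Real.sqrt x - 1)|)
        + 2 * Real.sqrt x * Real.arctan (Real.sqrt x)) :
    Tendsto w atTop (𝓝 (-2)) := by
  have A := limT1
  have B := limT1.comp tendsto_sqrt_atTop'
  have C := limArc.comp tendsto_sqrt_atTop'
  have D := (A.sub B).sub (C.const_mul 2)
  rw [show ((2:ℝ) - 2) - (2 * 1 : ℝ) = -2 by norm_num] at D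
  refine D.congr' ?_
  filter_upwards [eventually_gt_atTop 1] with x hx
  have hx0 : (0:ℝ) < x := by linarith
  have hs1 : 1 < Real.sqrt x := by
    rw [show (1:ℝ) = Real.sqrt 1 by rw [Real.sqrt_one]]
    exact (Real.sqrt_lt_sqrt zero_le_one hx)
  have e1 : |(x + 1) / (x - 1)| = (x + 1) / (x - 1) :=
    abs_of_pos (by apply div_pos <;> linarith)
  have e2 : |(Real.sqrt x + 1) / (Real.sqrt x - 1)| = (Real.sqrt x + 1) / (Real.sqrt x - 1) :=
    abs_of_pos (by apply div_pos <;> linarith)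
  rw [hw]
  simp only [Function.comp_def]
  rw [e1, e2]
  ring

theorem auxiliary_w_bounded_and_limits
    (w : ℝ → ℝ)
    (hw : w = fun x : ℝ =>
      -π * Real.sqrt x + x * Real.log (|(x + 1) / (x - 1)|)
        - Real.sqrt x * Real.log (|(Real.sqrt x + 1) / (Real.sqrt x - 1)|)
        + 2 * Real.sqrt x * Real.arctan (Real.sqrt x)) :
    (∃ M > (0:ℝ), ∀ x : ℝ, 0 < x → x ≠ 1 → |w x| ≤ M) ∧
    Tendsto w atTop (nhds (-2)) ∧
    Tendsto w (nhdsWithin 0 (Ioi 0)) (nhds 0) := by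
  have hlimW := w_atTop w hw
  have hweq : ∀ x : ℝ, 0 < x → x ≠ 1 → w x = gaux x := by
    intro x hx hx1
    rw [hw]
    exact weq hx hx1
  refine ⟨?_, hlimW, ?_⟩
  · -- boundedness
    have h3 : ∀ᶠ x in atTop, |w x - (-2)| < 1 := hlimW.eventually (eventually_abs_sub_lt (-2) one_pos)
    obtain ⟨A, hA⟩ := h3.exists_forall_of_atTop
    set A' : ℝ := max A 1 with hA'
    obtain ⟨C, hC⟩ := (isCompact_Icc (a := (0:ℝ)) (b := A')).exists_bound_of_continuousOn
      (fun x hx => (gaux_contAt hx.1).continuousWithinAt)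
    refine ⟨max C 3, lt_of_lt_of_le (by norm_num) (le_max_right _ _), fun x hx hx1 => ?_⟩
    rcases le_total x A' with hle | hge
    · rw [hweq x hx hx1]
      calc |gaux x| = ‖gaux x‖ := (Real.norm_eq_abs _).symm
        _ ≤ C := hC x ⟨hx.le, hle⟩
        _ ≤ max C 3 := le_max_left _ _
    · have := hA x (le_trans (le_max_left _ _) hge)
      calc |w x| = |(w x - (-2)) + (-2)| := by ring_nf
        _ ≤ |w x - (-2)| + |(-2 : ℝ)| := abs_add_le _ _
        _ ≤ 1 + 2 := by
            have : |(-2:ℝ)| = 2 := by norm_num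
            linarith [hA x (le_trans (le_max_left _ _) hge), this]
        _ ≤ max C 3 := by
            have := le_max_right C 3
            linarith
  · -- limit at 0+
    have hca : ContinuousAt w 0 := by
      rw [hw]
      have i1 : ContinuousAt (fun x : ℝ => (x + 1) / (x - 1)) 0 :=
        ((continuous_add_right 1).continuousAt).div ((continuous_sub_right 1).continuousAt)
          (by norm_num)
      have i1' : ContinuousAt (fun x : ℝ => Real.log (|(x + 1) / (x - 1)|)) 0 := by
        apply i1.abs.log
        norm_num
      have i2 : ContinuousAt (fun x : ℝ => (Real.sqrt x + 1) / (Real.sqrt x - 1)) 0 := by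
        apply (Real.continuous_sqrt.continuousAt.add continuousAt_const).div
          (Real.continuous_sqrt.continuousAt.sub continuousAt_const)
        simp [Real.sqrt_zero]
      have i2' : ContinuousAt
          (fun x : ℝ => Real.log (|(Real.sqrt x + 1) / (Real.sqrt x - 1)|)) 0 := by
        apply i2.abs.log
        simp [Real.sqrt_zero]
      exact ((((continuous_const.mul Real.continuous_sqrt).continuousAt).add
        (continuousAt_id.mul i1')).sub (Real.continuous_sqrt.continuousAt.mul i2')).add
        ((continuous_const.mul Real.continuous_sqrt).continuousAt.mul
          (Real.continuous_arctan.comp Real.continuous_sqrt).continuousAt)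
    have hval : w 0 = 0 := by
      rw [hw]
      simp [Real.sqrt_zero]
    have := hca.tendsto
    rw [hval] at this
    exact tendsto_nhdsWithin_of_tendsto_nhds this
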